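/- arXiv:1102.2536 — 4 statements merged into one kernel-verified Lean document; each statement's English description precedes it below -/
import Mathlib

section
/- Let Q₀ be a probability measure on ℝ, not a point mass, and let Γ be an open interval of parameters β for which Z(β) = ∫ exp(βx) dQ₀(x) < ∞; for β ∈ Γ let Q_β be the probability measure with dQ_β/dQ₀ = exp(βx)/Z(β), with mean μ_β and variance σ²_β. Then for all α, β ∈ Γ there exists γ between α and β such that D(Q_α‖Q_β) = (μ_α − μ_β)² / (2 σ²_γ). -/
/-!
Let `L` be the cumulant generating function of `Q₀`. As `Q_β` is the exponential tilt of `Q₀` by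
`β x`, its mean and variance are `L' β` and `L'' β`, and `log (dQ_α/dQ_β) = (α - β) x - (L α - L β)`,
so `D(Q_α‖Q_β) = L β - L α - (β - α) L' α`. As functions of `α`, this and `(L' α - L' β)² / 2` both
vanish at `β` and their derivatives are in the ratio `(α - β) : (L' α - L' β)`. Cauchy's mean value
theorem, followed by Lagrange's for `L'`, therefore gives the ratio `1 : L'' γ` of the two functions
themselves. Finally `L'' > 0` because `Q₀` is not a point mass.
-/

open MeasureTheory ProbabilityTheory Real

/- Kullback-Leibler divergence `D(P‖Q)`: equal to `∫ log(dP/dQ) dP` when `P ≪ Q` and the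
integrand is `P`-integrable, and `+∞` otherwise. -/
open Classical in
noncomputable def klDiv {Ω : Type*} [MeasurableSpace Ω] (P Q : Measure Ω) : EReal :=
  if P ≪ Q ∧ Integrable (fun ω => Real.log (P.rnDeriv Q ω).toReal) P
  then ((∫ ω, Real.log (P.rnDeriv Q ω).toReal ∂P : ℝ) : EReal)
  else ⊤

open Set

theorem exists_ratio_hasDerivAt_eq_ratio_slope_uIcc {f f' g g' : ℝ → ℝ} {a b : ℝ} (hab : a ≠ b)
    (hfc : ContinuousOn f (uIcc a b)) (hff' : ∀ x ∈ uIoo a b, HasDerivAt f (f' x) x)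
    (hgc : ContinuousOn g (uIcc a b)) (hgg' : ∀ x ∈ uIoo a b, HasDerivAt g (g' x) x) :
    ∃ c ∈ uIoo a b, (g b - g a) * f' c = (f b - f a) * g' c := by
  rcases hab.lt_or_gt with h | h
  · rw [uIcc_of_lt h] at hfc hgc
    rw [uIoo_of_lt h] at hff' hgg' ⊢
    exact exists_ratio_hasDerivAt_eq_ratio_slope f f' h hfc hff' g g' hgc hgg'
  · rw [uIcc_of_gt h] at hfc hgc
    rw [uIoo_of_gt h] at hff' hgg' ⊢
    obtain ⟨c, hc, hslope⟩ := exists_ratio_hasDerivAt_eq_ratio_slope f f' h hfc hff' g g' hgc hgg'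
    exact ⟨c, hc, by linear_combination -hslope⟩

theorem exists_mem_uIcc_bregman_eq_sq_div {L M V : ℝ → ℝ} {α β : ℝ}
    (hL : ∀ t ∈ uIcc α β, HasDerivAt L (M t) t) (hM : ∀ t ∈ uIcc α β, HasDerivAt M (V t) t)
    (hV : ∀ t ∈ uIcc α β, V t ≠ 0) :
    ∃ γ ∈ uIcc α β, L β - L α - (β - α) * M α = (M α - M β) ^ 2 / (2 * V γ) := by
  rcases eq_or_ne α β with rfl | hne
  · exact ⟨α, left_mem_uIcc, by simp⟩
  set F : ℝ → ℝ := fun t => L β - L t - (β - t) * M t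
  set G : ℝ → ℝ := fun t => (M t - M β) ^ 2 / 2
  have hF : ∀ t ∈ uIcc α β, HasDerivAt F ((t - β) * V t) t := fun t ht =>
    (((hasDerivAt_const t (L β)).sub (hL t ht)).sub
      (((hasDerivAt_id' t).const_sub β).mul (hM t ht))).congr_deriv (by ring)
  have hG : ∀ t ∈ uIcc α β, HasDerivAt G ((M t - M β) * V t) t := fun t ht =>
    ((((hM t ht).sub_const (M β)).pow 2).div_const 2).congr_deriv (by ring)
  obtain ⟨c, hc, hFG⟩ := exists_ratio_hasDerivAt_eq_ratio_slope_uIcc hne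
    (fun t ht => (hF t ht).continuousAt.continuousWithinAt)
    (fun t ht => hF t (uIoo_subset_uIcc_self ht))
    (fun t ht => (hG t ht).continuousAt.continuousWithinAt)
    (fun t ht => hG t (uIoo_subset_uIcc_self ht))
  have hcβ : c ≠ β := fun h => right_notMem_uIoo (h ▸ hc)
  have hc' : c ∈ uIcc α β := uIoo_subset_uIcc_self hc
  have hsub : uIcc β c ⊆ uIcc α β := uIcc_subset_uIcc right_mem_uIcc hc'
  obtain ⟨ξ, hξ, hMc⟩ := exists_ratio_hasDerivAt_eq_ratio_slope_uIcc hcβ.symm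
    (fun t ht => (hM t (hsub ht)).continuousAt.continuousWithinAt)
    (fun t ht => hM t (hsub (uIoo_subset_uIcc_self ht)))
    continuousOn_id (fun t _ => hasDerivAt_id t)
  have hξ' : ξ ∈ uIcc α β := hsub (uIoo_subset_uIcc_self hξ)
  have hGF : G α = F α * V ξ := by
    refine mul_right_cancel₀ (mul_ne_zero (sub_ne_zero.2 hcβ) (hV c hc')) ?_
    simp only [F, G, id, sub_self, zero_pow two_ne_zero, zero_div] at hFG hMc ⊢
    linear_combination -hFG - (L β - L α - (β - α) * M α) * V c * hMc
  refine ⟨ξ, hξ', ?_⟩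
  rw [eq_div_iff (mul_ne_zero two_ne_zero (hV ξ hξ'))]
  simp only [F, G] at hGF
  linear_combination -2 * hGF

lemma eq_dirac_of_ae_eq {α : Type*} {mα : MeasurableSpace α} [MeasurableSingletonClass α]
    {μ : Measure α} [IsProbabilityMeasure μ] {c : α} (h : ∀ᵐ x ∂μ, x = c) :
    μ = Measure.dirac c := by
  have hc : μ {c} = 1 := (prob_compl_eq_zero_iff (measurableSet_singleton c)).1 (ae_iff.1 h)
  have hμ := (Measure.ae_mem_finset_iff (s := {c})).1 (by simpa using h)
  rwa [Finset.sum_singleton, hc, one_smul] at hμ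

section ExponentialFamily

variable {Ω : Type*} {mΩ : MeasurableSpace Ω} {X : Ω → ℝ} {μ : Measure Ω} {s t : ℝ}

lemma hasDerivAt_deriv_cgf (ht : t ∈ interior (integrableExpSet X μ)) :
    HasDerivAt (deriv (cgf X μ)) (iteratedDeriv 2 (cgf X μ) t) t := by
  rw [iteratedDeriv_succ, iteratedDeriv_one]
  exact (analyticAt_cgf ht).deriv.differentiableAt.hasDerivAt

lemma iteratedDeriv_two_cgf_pos (hX : ∀ c, ¬ X =ᵐ[μ] fun _ => c)
    (ht : t ∈ interior (integrableExpSet X μ)) : 0 < iteratedDeriv 2 (cgf X μ) t := by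
  rw [← variance_tilted_mul ht]
  refine (variance_nonneg X _).lt_of_ne fun hvar => hX ((μ.tilted (t * X ·))[X]) ?_
  have hconst := ae_eq_integral_of_variance_eq_zero (memLp_tilted_mul ht 2) hvar.symm
  exact (absolutelyContinuous_tilted (interior_subset (s := integrableExpSet X μ) ht)).ae_le hconst

lemma tilted_tilted_mul (ht : t ∈ integrableExpSet X μ) :
    (μ.tilted (t * X ·)).tilted ((s - t) * X ·) = μ.tilted (s * X ·) := by
  rw [tilted_tilted ht]
  congr 1 with ω
  simp only [Pi.add_apply]
  ring

lemma tilted_mul_absolutelyContinuous (ht : t ∈ integrableExpSet X μ) :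
    μ.tilted (s * X ·) ≪ μ.tilted (t * X ·) :=
  tilted_tilted_mul ht ▸ tilted_absolutelyContinuous _ _

lemma log_rnDeriv_tilted_mul [NeZero μ] (hs : s ∈ integrableExpSet X μ)
    (ht : t ∈ integrableExpSet X μ) :
    (fun ω => log ((μ.tilted (s * X ·)).rnDeriv (μ.tilted (t * X ·)) ω).toReal)
      =ᵐ[μ.tilted (s * X ·)] fun ω => (s - t) * X ω - (cgf X μ s - cgf X μ t) := by
  have hexp : Integrable (fun ω => exp ((s - t) * X ω)) (μ.tilted (t * X ·)) := by
    rw [integrable_tilted_iff ht]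
    refine (integrable_congr (ae_of_all _ fun ω => ?_)).mp hs
    simp only [smul_eq_mul, ← exp_add]
    ring_nf
  have hmgf : ∫ ω, exp ((s - t) * X ω) ∂(μ.tilted (t * X ·)) = mgf X μ s / mgf X μ t := by
    simp only [integral_exp_tilted, mgf, Pi.add_apply]
    congr 2 with ω
    ring_nf
  have h := log_rnDeriv_tilted_left_self hexp
  rw [tilted_tilted_mul ht, hmgf,
    log_div (mgf_pos' (NeZero.ne μ) hs).ne' (mgf_pos' (NeZero.ne μ) ht).ne'] at h
  exact (tilted_mul_absolutelyContinuous ht).ae_eq h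

lemma klDiv_tilted_mul [NeZero μ] (hs : s ∈ interior (integrableExpSet X μ))
    (ht : t ∈ integrableExpSet X μ) :
    klDiv (μ.tilted (s * X ·)) (μ.tilted (t * X ·)) =
      (((s - t) * deriv (cgf X μ) s - (cgf X μ s - cgf X μ t) : ℝ) : EReal) := by
  have hs' : s ∈ integrableExpSet X μ := interior_subset hs
  have := isProbabilityMeasure_tilted hs'
  have hlog := log_rnDeriv_tilted_mul hs' ht
  have hX : Integrable X (μ.tilted (s * X ·)) := (memLp_tilted_mul hs 1).integrable le_rfl
  have hlin : Integrable (fun ω => (s - t) * X ω - (cgf X μ s - cgf X μ t)) (μ.tilted (s * X ·)) :=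
    (hX.const_mul _).sub (integrable_const _)
  rw [klDiv, if_pos ⟨tilted_mul_absolutelyContinuous ht, hlin.congr hlog.symm⟩,
    integral_congr_ae hlog, integral_sub (hX.const_mul _) (integrable_const _), integral_const_mul,
    integral_const, integral_tilted_mul_self hs]
  simp

theorem exists_klDiv_tilted_mul_eq_sq_div (hX : ∀ c, ¬ X =ᵐ[μ] fun _ => c)
    (hs : s ∈ interior (integrableExpSet X μ)) (ht : t ∈ interior (integrableExpSet X μ)) :
    ∃ γ ∈ uIcc s t, klDiv (μ.tilted (s * X ·)) (μ.tilted (t * X ·)) =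
      ((((μ.tilted (s * X ·))[X] - (μ.tilted (t * X ·))[X]) ^ 2 /
        (2 * Var[X; μ.tilted (γ * X ·)]) : ℝ) : EReal) := by
  have : NeZero μ := ⟨fun h0 => hX 0 (by simp [h0, Filter.EventuallyEq])⟩
  have hI : uIcc s t ⊆ interior (integrableExpSet X μ) :=
    convex_integrableExpSet.interior.ordConnected.uIcc_subset hs ht
  obtain ⟨γ, hγ, hbregman⟩ := exists_mem_uIcc_bregman_eq_sq_div
    (fun u hu => (analyticAt_cgf (hI hu)).differentiableAt.hasDerivAt)
    (fun u hu => hasDerivAt_deriv_cgf (hI hu))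
    (fun u hu => (iteratedDeriv_two_cgf_pos hX (hI hu)).ne')
  refine ⟨γ, hγ, ?_⟩
  rw [klDiv_tilted_mul hs (interior_subset ht), integral_tilted_mul_self hs,
    integral_tilted_mul_self ht, variance_tilted_mul (hI hγ), ← hbregman]
  congr 1
  ring

end ExponentialFamily

theorem stmt_0
    (Q₀ : Measure ℝ) [IsProbabilityMeasure Q₀]
    (hQ₀ : ∀ c : ℝ, Q₀ ≠ Measure.dirac c)
    (Γ : Set ℝ) (hΓopen : IsOpen Γ) (hΓconn : Γ.OrdConnected)
    (hZ : ∀ β ∈ Γ, Integrable (fun x => Real.exp (β * x)) Q₀)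
    (Q : ℝ → Measure ℝ)
    (hQ : ∀ β ∈ Γ, Q β = Q₀.withDensity (fun x =>
      ENNReal.ofReal (Real.exp (β * x) / ∫ y, Real.exp (β * y) ∂Q₀)))
    (μ : ℝ → ℝ) (hμ : ∀ β ∈ Γ, μ β = ∫ x, x ∂(Q β))
    (α β : ℝ) (hα : α ∈ Γ) (hβ : β ∈ Γ) :
    ∃ γ ∈ Set.Icc (min α β) (max α β),
      klDiv (Q α) (Q β) =
        (((μ α - μ β) ^ 2 / (2 * variance id (Q γ)) : ℝ) : EReal) := by
  -- `Measure.tilted` unfolds to exactly the `withDensity` of `hQ`.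
  have hQt : ∀ t ∈ Γ, Q t = Q₀.tilted (t * id ·) := fun t ht => hQ t ht
  have hΓ : Γ ⊆ interior (integrableExpSet id Q₀) := interior_maximal hZ hΓopen
  have hX : ∀ c, ¬ (id : ℝ → ℝ) =ᵐ[Q₀] fun _ => c := fun c h => hQ₀ c (eq_dirac_of_ae_eq h)
  obtain ⟨γ, hγ, hkl⟩ := exists_klDiv_tilted_mul_eq_sq_div hX (hΓ hα) (hΓ hβ)
  refine ⟨γ, hγ, ?_⟩
  rw [hμ α hα, hμ β hβ, hQt α hα, hQt β hβ, hQt γ (hΓconn.uIcc_subset hα hβ hγ)]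
  exact hkl
end

section
/- Let Φ denote the standard Gaussian distribution N(0,1) on ℝ. For every probability measure P on ℝ with finite second moment whose variance v := Var(P) satisfies v ≤ 1, one has D(P‖Φ) ≥ (v − 1)²/6. -/
/-!
Let `m` and `v > 0` be the mean and variance of `P` (positive because `P ≪ Φ` has no atoms) and
let `G = N(m, v)`. Then `log (dP/dΦ) = log (dP/dG) + log (dG/dΦ)` `P`-almost everywhere. Gibbs'
inequality makes the first term nonnegative in `P`-mean, and the second is a quadratic polynomial,
so its `P`-mean depends only on `m` and `v`: it is `(v - 1 - log v + m²) / 2`. Finally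
`v - 1 - log v ≥ (v - 1)² / 3` on `(0, 1]`, from `v ≤ (1 + y / 3)³ ≤ exp y` with
`y = (v - 1) - (v - 1)² / 3`.
-/

open MeasureTheory ProbabilityTheory Real

open scoped NNReal

lemma sq_sub_one_div_three_le_sub_one_sub_log {v : ℝ} (hv0 : 0 < v) (hv1 : v ≤ 1) :
    (v - 1) ^ 2 / 3 ≤ v - 1 - log v := by
  set u := v - 1 with hu
  have hu_sq : u ^ 2 ≤ 1 := by nlinarith
  have hcube : v ≤ (1 + (u - u ^ 2 / 3) / 3) ^ 3 := by
    have hid : (1 + (u - u ^ 2 / 3) / 3) ^ 3 - v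
        = u ^ 2 * -u * (135 - 9 * u ^ 2 + u ^ 3) / 729 := by
      rw [hu]; ring
    have : 0 ≤ u ^ 2 * -u * (135 - 9 * u ^ 2 + u ^ 3) :=
      mul_nonneg (mul_nonneg (sq_nonneg u) (by linarith)) (by nlinarith)
    linarith
  have hexp : (1 + (u - u ^ 2 / 3) / 3) ^ 3 ≤ exp (u - u ^ 2 / 3) := by
    calc (1 + (u - u ^ 2 / 3) / 3) ^ 3 ≤ exp ((u - u ^ 2 / 3) / 3) ^ 3 :=
          pow_le_pow_left₀ (by nlinarith) (by linarith [add_one_le_exp ((u - u ^ 2 / 3) / 3)]) 3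
      _ = exp (u - u ^ 2 / 3) := by rw [← exp_nat_mul]; ring_nf
  linarith [(log_le_iff_le_exp hv0).2 (hcube.trans hexp)]

lemma log_gaussianPDFReal (μ : ℝ) {v : ℝ≥0} (hv : v ≠ 0) (x : ℝ) :
    log (gaussianPDFReal μ v x) = -log (2 * π * v) / 2 - (x - μ) ^ 2 / (2 * v) := by
  have h2πv : 0 < 2 * π * v := by positivity
  rw [gaussianPDFReal, log_mul (by positivity) (exp_ne_zero _), log_exp, log_inv,
    log_sqrt h2πv.le]
  ring

lemma rnDeriv_gaussianReal_gaussianReal (μ μ' : ℝ) (v : ℝ≥0) {v' : ℝ≥0} (hv' : v' ≠ 0) :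
    (gaussianReal μ v).rnDeriv (gaussianReal μ' v') =ᵐ[volume]
      fun x ↦ (gaussianPDF μ' v' x)⁻¹ * gaussianPDF μ v x := by
  rw [gaussianReal_of_var_ne_zero μ' hv']
  filter_upwards [Measure.rnDeriv_withDensity_right (gaussianReal μ v) volume
    (measurable_gaussianPDF μ' v').aemeasurable (.of_forall fun x ↦ (gaussianPDF_pos _ hv' x).ne')
    (.of_forall fun _ ↦ gaussianPDF_ne_top), rnDeriv_gaussianReal μ v] with x hx hx'
  rw [hx, hx']

lemma llr_gaussianReal_gaussianReal (μ μ' : ℝ) {v v' : ℝ≥0} (hv : v ≠ 0) (hv' : v' ≠ 0) :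
    llr (gaussianReal μ v) (gaussianReal μ' v') =ᵐ[volume]
      fun x ↦ (log v' - log v) / 2 + (x - μ') ^ 2 / (2 * v') - (x - μ) ^ 2 / (2 * v) := by
  filter_upwards [rnDeriv_gaussianReal_gaussianReal μ μ' v hv'] with x hx
  have hpos := gaussianPDFReal_pos μ v x hv
  have hpos' := gaussianPDFReal_pos μ' v' x hv'
  simp only [llr]
  rw [hx, ENNReal.toReal_mul, ENNReal.toReal_inv, toReal_gaussianPDF, toReal_gaussianPDF,
    log_mul (inv_pos.2 hpos').ne' hpos.ne', log_inv, log_gaussianPDFReal μ hv,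
    log_gaussianPDFReal μ' hv', log_mul (x := 2 * π) (y := v) (by positivity) (by simpa),
    log_mul (x := 2 * π) (y := v') (by positivity) (by simpa)]
  ring

lemma llr_ae_eq_llr_add_llr {α : Type*} [MeasurableSpace α] {P G Q : Measure α} [SigmaFinite P]
    [SigmaFinite G] [SigmaFinite Q] (hPG : P ≪ G) (hGQ : G ≪ Q) :
    llr P Q =ᵐ[P] llr P G + llr G Q := by
  filter_upwards [(hPG.trans hGQ).ae_le (Measure.rnDeriv_mul_rnDeriv hPG),
    Measure.rnDeriv_pos hPG, hPG.ae_le (Measure.rnDeriv_lt_top P G),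
    hPG.ae_le (Measure.rnDeriv_pos hGQ), (hPG.trans hGQ).ae_le (Measure.rnDeriv_lt_top G Q)]
    with x hx hPG_pos hPG_lt hGQ_pos hGQ_lt
  simp only [Pi.add_apply, llr]
  rw [← hx, Pi.mul_apply, ENNReal.toReal_mul,
    log_mul (ENNReal.toReal_pos hPG_pos.ne' hPG_lt.ne).ne'
      (ENNReal.toReal_pos hGQ_pos.ne' hGQ_lt.ne).ne']

lemma integral_llr_le_integral_llr {α : Type*} [MeasurableSpace α] {P G Q : Measure α}
    [IsProbabilityMeasure P] [IsProbabilityMeasure G] [SigmaFinite Q] (hPG : P ≪ G) (hGQ : G ≪ Q)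
    (hPQ_int : Integrable (llr P Q) P) (hGQ_int : Integrable (llr G Q) P) :
    ∫ x, llr G Q x ∂P ≤ ∫ x, llr P Q x ∂P := by
  have hsplit := llr_ae_eq_llr_add_llr hPG hGQ
  have hPG_int : Integrable (llr P G) P :=
    (hPQ_int.sub hGQ_int).congr (by filter_upwards [hsplit] with x hx; simp [hx])
  have hgibbs := InformationTheory.integral_llr_add_sub_measure_univ_nonneg hPG hPG_int
  rw [integral_congr_ae hsplit, Pi.add_def, integral_add hPG_int hGQ_int]
  simp only [probReal_univ] at hgibbs
  linarith

lemma variance_id_pos {P : Measure ℝ} [IsFiniteMeasure P] [NeZero P] [NullSingletonClass P]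
    (hX : MemLp id 2 P) : 0 < variance id P := by
  refine (variance_nonneg _ _).lt_of_ne' fun h0 ↦ NeZero.ne P ?_
  have hfalse : ∀ᵐ x ∂P, False := by
    filter_upwards [ae_eq_integral_of_variance_eq_zero hX h0, Measure.ae_ne P (P[id])] with x h h'
    exact h' h
  simpa using hfalse

lemma integrable_llr_gaussianReal {P : Measure ℝ} [IsFiniteMeasure P] (hPvol : P ≪ volume)
    (hX : MemLp id 2 P) (μ μ' : ℝ) {v v' : ℝ≥0} (hv : v ≠ 0) (hv' : v' ≠ 0) :
    Integrable (llr (gaussianReal μ v) (gaussianReal μ' v')) P := by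
  have hsq (c : ℝ) : Integrable (fun x ↦ (x - c) ^ 2) P := (hX.sub (memLp_const c)).integrable_sq
  refine Integrable.congr ?_ (hPvol.ae_eq (llr_gaussianReal_gaussianReal μ μ' hv hv')).symm
  exact ((integrable_const _).add ((hsq μ').div_const _)).sub ((hsq μ).div_const _)

lemma integral_llr_gaussianReal_of_moments {P : Measure ℝ} [IsProbabilityMeasure P]
    (hPvol : P ≪ volume) (hX : MemLp id 2 P) {v : ℝ≥0} (hv : v ≠ 0)
    (hvar : variance id P = v) :
    ∫ x, llr (gaussianReal (∫ x, x ∂P) v) (gaussianReal 0 1) x ∂P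
      = ((v : ℝ) - 1 - log v + (∫ x, x ∂P) ^ 2) / 2 := by
  have hsq (c : ℝ) : Integrable (fun x ↦ (x - c) ^ 2) P := (hX.sub (memLp_const c)).integrable_sq
  have hcentral : ∫ x, (x - ∫ x, x ∂P) ^ 2 ∂P = (v : ℝ) := by
    simpa [hvar] using (variance_eq_integral aemeasurable_id (μ := P)).symm
  have hsecond : ∫ x, (x - 0) ^ 2 ∂P = (v : ℝ) + (∫ x, x ∂P) ^ 2 := by
    have := variance_eq_sub hX
    simp only [hvar, Pi.pow_apply, id] at this
    simp only [sub_zero]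
    linarith
  rw [integral_congr_ae (hPvol.ae_eq (llr_gaussianReal_gaussianReal _ _ hv one_ne_zero)),
    integral_sub, integral_add, integral_const, integral_div, integral_div, hcentral, hsecond]
  · have hv0 : (v : ℝ) ≠ 0 := by simpa
    field_simp
    simp
    ring
  all_goals fun_prop

theorem stmt_4
    (P : Measure ℝ) [IsProbabilityMeasure P]
    (hint : Integrable (fun x => x ^ 2) P)
    (hv : variance id P ≤ 1) :
    (((variance id P - 1) ^ 2 / 6 : ℝ) : EReal) ≤ klDiv P (gaussianReal 0 1) := by
  unfold klDiv
  split_ifs with h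
  · obtain ⟨hPΦ, hPΦ_int⟩ := h
    have hPvol : P ≪ volume := hPΦ.trans (gaussianReal_absolutelyContinuous 0 one_ne_zero)
    have hX : MemLp id 2 P := (memLp_two_iff_integrable_sq aestronglyMeasurable_id).2 hint
    have : NullSingletonClass P := ⟨fun x ↦ hPvol (measure_singleton x)⟩
    have hv0 := variance_id_pos hX
    lift variance id P to ℝ≥0 using hv0.le with v hvar
    have hv_ne : v ≠ 0 := by rintro rfl; simp at hv0
    let G := gaussianReal (∫ x, x ∂P) v
    have hPG : P ≪ G := hPvol.trans (gaussianReal_absolutelyContinuous' _ hv_ne)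
    have hGΦ : G ≪ gaussianReal 0 1 := (gaussianReal_absolutelyContinuous _ hv_ne).trans
      (gaussianReal_absolutelyContinuous' 0 one_ne_zero)
    refine EReal.coe_le_coe_iff.2 ?_
    calc ((v : ℝ) - 1) ^ 2 / 6 ≤ ((v : ℝ) - 1 - log v + (∫ x, x ∂P) ^ 2) / 2 := by
          linarith [sq_sub_one_div_three_le_sub_one_sub_log hv0 hv, sq_nonneg (∫ x, x ∂P)]
      _ = ∫ x, llr G (gaussianReal 0 1) x ∂P :=
          (integral_llr_gaussianReal_of_moments hPvol hX hv_ne hvar.symm).symm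
      _ ≤ ∫ x, llr P (gaussianReal 0 1) x ∂P := integral_llr_le_integral_llr hPG hGΦ hPΦ_int
          (integrable_llr_gaussianReal hPvol hX _ _ hv_ne one_ne_zero)
  · exact le_top
end

section
/- Let α > −1 and θ > 0, and let m := (α+1)θ be the mean of the Gamma distribution Γ_{α+1,θ}. For every probability measure P on (0,∞) with finite first moment such that E := ∫ x dP(x) ≤ m, one has D(P‖Γ_{α+1,θ}) ≥ (α+1)·(E − m)² / (2 m²). -/
/-
Tilting the reference measure by `exp (t x)` and applying Gibbs' inequality gives the
Donsker–Varadhan bound `D(P‖Q) ≥ t E - log ∫ exp (t x) dQ`. For `Q = Γ(a, rate r)` the Laplace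
transform is `(r / (r - t)) ^ a`, and the choice `t = r - a / E` (which tilts `Q` to the Gamma
law with mean `E`) yields `D(P‖Q) ≥ a (s - 1 - log s)` with `s = r E / a = E / m`. On `(0, 1]`
the series of `-log s` in powers of `1 - s` gives `s - 1 - log s ≥ (s - 1)² / 2`.
-/

open MeasureTheory ProbabilityTheory Real

theorem integral_pos_of_ae_pos {Ω : Type*} [MeasurableSpace Ω] {μ : Measure Ω} [NeZero μ]
    {f : Ω → ℝ} (hf : ∀ᵐ x ∂μ, 0 < f x) (hfi : Integrable f μ) : 0 < ∫ x, f x ∂μ := by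
  rw [integral_pos_iff_support_of_nonneg_ae (hf.mono fun _ ↦ le_of_lt) hfi, pos_iff_ne_zero]
  intro h
  have : ∀ᵐ x ∂μ, False := by
    filter_upwards [hf, measure_eq_zero_iff_ae_notMem.1 h] with x hx hx'
    exact hx' hx.ne'
  exact NeZero.ne μ (ae_eq_bot.1 (Filter.eventually_false_iff_eq_bot.1 this))

theorem integral_sub_log_integral_exp_le_integral_llr {Ω : Type*} [MeasurableSpace Ω]
    {μ ν : Measure Ω} [IsProbabilityMeasure μ] [SigmaFinite ν] [NeZero ν] {f : Ω → ℝ}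
    (hμν : μ ≪ ν) (h_int : Integrable (llr μ ν) μ) (hfμ : Integrable f μ)
    (hfν : Integrable (fun x ↦ exp (f x)) ν) :
    ∫ x, f x ∂μ - log (∫ x, exp (f x) ∂ν) ≤ ∫ x, llr μ ν x ∂μ := by
  have := isProbabilityMeasure_tilted hfν
  have gibbs := InformationTheory.integral_llr_add_sub_measure_univ_nonneg
    (hμν.trans (absolutelyContinuous_tilted hfν)) (integrable_llr_tilted_right hμν hfμ h_int hfν)
  rw [integral_llr_tilted_right hμν hfμ hfν h_int] at gibbs
  simp only [probReal_univ, add_sub_cancel_right] at gibbs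
  linarith

theorem sq_sub_one_div_two_le_sub_one_sub_log {x : ℝ} (hx₀ : 0 < x) (hx₁ : x ≤ 1) :
    (x - 1) ^ 2 / 2 ≤ x - 1 - log x := by
  have hlog := hasSum_pow_div_log_of_abs_lt_one (x := 1 - x)
    (by rw [abs_lt]; constructor <;> linarith)
  have hpartial := sum_le_hasSum (Finset.range 2) (fun n _ ↦ by positivity) hlog
  norm_num [Finset.sum_range_succ] at hpartial
  nlinarith

section GammaMeasure

variable {a r t : ℝ}

theorem measurable_gammaPDF (a r : ℝ) : Measurable (gammaPDF a r) :=
  (measurable_gammaPDFReal a r).ennreal_ofReal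

theorem gammaMeasure_Iic_zero (a r : ℝ) : gammaMeasure a r (Set.Iic 0) = 0 := by
  rw [gammaMeasure, withDensity_apply _ measurableSet_Iic, setLIntegral_congr Iio_ae_eq_Iic.symm,
    lintegral_gammaPDF_of_nonpos le_rfl]

theorem ae_pos_of_absolutelyContinuous_gammaMeasure {P : Measure ℝ} (hP : P ≪ gammaMeasure a r) :
    ∀ᵐ x ∂P, 0 < x :=
  hP (measure_mono_null (fun x hx ↦ by simpa using hx) (gammaMeasure_Iic_zero a r))

theorem gammaPDF_mul_ofReal_exp_mul (hr : 0 < r) (ht : t < r) (x : ℝ) :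
    gammaPDF a r x * ENNReal.ofReal (exp (t * x)) =
      ENNReal.ofReal ((r / (r - t)) ^ a) * gammaPDF a (r - t) x := by
  rcases le_or_gt 0 x with hx | hx
  · have hrt : 0 < r - t := sub_pos.2 ht
    rw [gammaPDF_of_nonneg hx, gammaPDF_of_nonneg hx, ← ENNReal.ofReal_mul' (exp_pos _).le,
      ← ENNReal.ofReal_mul (by positivity)]
    congr 1
    have hpow : (r / (r - t)) ^ a * (r - t) ^ a = r ^ a := by
      rw [← mul_rpow (by positivity) hrt.le, div_mul_cancel₀ _ hrt.ne']
    have hexp : exp (-(r * x)) * exp (t * x) = exp (-((r - t) * x)) := by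
      rw [← exp_add]; ring_nf
    rw [← hpow, ← hexp]
    ring
  · simp [gammaPDF_of_neg hx]

theorem lintegral_exp_mul_gammaMeasure (ha : 0 < a) (hr : 0 < r) (ht : t < r) :
    ∫⁻ x, ENNReal.ofReal (exp (t * x)) ∂gammaMeasure a r = ENNReal.ofReal ((r / (r - t)) ^ a) := by
  rw [gammaMeasure, lintegral_withDensity_eq_lintegral_mul _ (measurable_gammaPDF a r)
    (by fun_prop)]
  simp_rw [Pi.mul_apply, gammaPDF_mul_ofReal_exp_mul hr ht]
  rw [lintegral_const_mul _ (measurable_gammaPDF a (r - t)),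
    lintegral_gammaPDF_eq_one ha (sub_pos.2 ht), mul_one]

theorem integrable_exp_mul_gammaMeasure (ha : 0 < a) (hr : 0 < r) (ht : t < r) :
    Integrable (fun x ↦ exp (t * x)) (gammaMeasure a r) := by
  refine ⟨by fun_prop, ?_⟩
  rw [hasFiniteIntegral_iff_ofReal (ae_of_all _ fun x ↦ (exp_pos _).le),
    lintegral_exp_mul_gammaMeasure ha hr ht]
  exact ENNReal.ofReal_lt_top

theorem integral_exp_mul_gammaMeasure (ha : 0 < a) (hr : 0 < r) (ht : t < r) :
    ∫ x, exp (t * x) ∂gammaMeasure a r = (r / (r - t)) ^ a := by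
  rw [integral_eq_lintegral_of_nonneg_ae (ae_of_all _ fun x ↦ (exp_pos _).le) (by fun_prop),
    lintegral_exp_mul_gammaMeasure ha hr ht, ENNReal.toReal_ofReal (by positivity)]

theorem mul_sub_one_sub_log_le_integral_llr_gammaMeasure (ha : 0 < a) (hr : 0 < r)
    {P : Measure ℝ} [IsProbabilityMeasure P] (hP : P ≪ gammaMeasure a r)
    (h_int : Integrable (llr P (gammaMeasure a r)) P) (hmean : Integrable (fun x ↦ x) P) :
    a * (r * (∫ x, x ∂P) / a - 1 - log (r * (∫ x, x ∂P) / a)) ≤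
      ∫ x, llr P (gammaMeasure a r) x ∂P := by
  have := isProbabilityMeasure_gammaMeasure ha hr
  set E := ∫ x, x ∂P
  have hE : 0 < E := integral_pos_of_ae_pos (ae_pos_of_absolutelyContinuous_gammaMeasure hP) hmean
  have ht : r - a / E < r := sub_lt_self r (div_pos ha hE)
  have hdv := integral_sub_log_integral_exp_le_integral_llr hP h_int (hmean.const_mul (r - a / E))
    (integrable_exp_mul_gammaMeasure ha hr ht)
  rw [integral_const_mul, integral_exp_mul_gammaMeasure ha hr ht, sub_sub_cancel,
    log_rpow (by positivity)] at hdv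
  convert hdv using 1
  field_simp
  ring

end GammaMeasure

theorem stmt_5_general
    (α θ : ℝ) (hα : -1 < α) (hθ : 0 < θ)
    (P : Measure ℝ) [IsProbabilityMeasure P]
    (hint : Integrable (fun x => x) P)
    (hE : ∫ x, x ∂P ≤ (α + 1) * θ) :
    (((α + 1) * ((∫ x, x ∂P) - (α + 1) * θ) ^ 2 / (2 * ((α + 1) * θ) ^ 2) : ℝ) : EReal)
      ≤ klDiv P (gammaMeasure (α + 1) θ⁻¹) := by
  have ha : 0 < α + 1 := by linarith
  rw [klDiv]
  split_ifs with h
  · obtain ⟨hPQ, h_int⟩ := h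
    have hbound := mul_sub_one_sub_log_le_integral_llr_gammaMeasure ha (inv_pos.2 hθ) hPQ h_int hint
    have hmean : 0 < ∫ x, x ∂P :=
      integral_pos_of_ae_pos (ae_pos_of_absolutelyContinuous_gammaMeasure hPQ) hint
    set s := θ⁻¹ * (∫ x, x ∂P) / (α + 1)
    have hs₀ : 0 < s := by positivity
    have hs₁ : s ≤ 1 := by
      rw [div_le_one ha, inv_mul_le_iff₀ hθ]
      linarith
    rw [EReal.coe_le_coe_iff]
    calc (α + 1) * ((∫ x, x ∂P) - (α + 1) * θ) ^ 2 / (2 * ((α + 1) * θ) ^ 2)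
        = (α + 1) * ((s - 1) ^ 2 / 2) := by simp only [s]; field_simp
      _ ≤ (α + 1) * (s - 1 - log s) := by
        gcongr; exact sq_sub_one_div_two_le_sub_one_sub_log hs₀ hs₁
      _ ≤ _ := hbound
  · exact le_top

theorem stmt_5
    (α θ : ℝ) (hα : -1 < α) (hθ : 0 < θ)
    (P : Measure ℝ) [IsProbabilityMeasure P] (hsupp : P (Set.Iic 0) = 0)
    (hint : Integrable (fun x => x) P)
    (hE : ∫ x, x ∂P ≤ (α + 1) * θ) :
    (((α + 1) * ((∫ x, x ∂P) - (α + 1) * θ) ^ 2 / (2 * ((α + 1) * θ) ^ 2) : ℝ) : EReal)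
      ≤ klDiv P (gammaMeasure (α + 1) θ⁻¹) :=
  stmt_5_general α θ hα hθ P hint hE
end

section
/- Let λ > 0 and let Po(λ) denote the Poisson distribution on ℕ. For every probability measure P on ℕ with finite mean E := Σ_j j·P({j}) such that E ≤ λ, one has D(P‖Po(λ)) ≥ (E − λ)² / (2λ). -/
/-!
Donsker–Varadhan: for every `f`, `D(P‖Q) ≥ ∫ f dP - log ∫ exp f dQ`, which is Gibbs' inequality
for `P` against the exponentially tilted measure `Q.tilted f`. Taking `f j = t j` against
`Po(λ)`, whose moment generating function is `exp (λ (eᵗ - 1))`, gives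
`D(P‖Po(λ)) ≥ t E - λ (eᵗ - 1)`. With `t = (E - λ) / λ ≤ 0` the estimate
`eᵗ ≤ 1 + t + t² / 2` turns the right-hand side into at least `λ t² / 2 = (E - λ)² / (2λ)`.
-/

open MeasureTheory ProbabilityTheory Real

lemma Real.exp_le_quadratic_of_nonpos {x : ℝ} (hx : x ≤ 0) : exp x ≤ 1 + x + x ^ 2 / 2 := by
  have h := quadratic_le_exp_of_nonneg (neg_nonneg.2 hx)
  have hmul : exp x * exp (-x) = 1 := by rw [← exp_add, add_neg_cancel, exp_zero]
  -- `(1 + x + x² / 2) (1 - x + x² / 2) = 1 + x⁴ / 4 ≥ 1`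
  nlinarith [exp_pos x, sq_nonneg x, pow_two_nonneg (x ^ 2)]

lemma sq_sub_div_two_mul_le_of_le {lam E : ℝ} (hlam : 0 ≤ lam) (hE : E ≤ lam) :
    (E - lam) ^ 2 / (2 * lam) ≤ (E - lam) / lam * E - lam * (exp ((E - lam) / lam) - 1) := by
  rcases hlam.eq_or_lt with rfl | hlam
  · simp
  obtain ⟨u, hu, rfl⟩ : ∃ u ≤ 0, E = lam * (1 + u) :=
    ⟨(E - lam) / lam, div_nonpos_of_nonpos_of_nonneg (by linarith) hlam.le, by field_simp; ring⟩
  have hu' : (lam * (1 + u) - lam) / lam = u := by field_simp; ring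
  rw [hu', show (lam * (1 + u) - lam) ^ 2 / (2 * lam) = lam * (u ^ 2 / 2) by field_simp; ring]
  nlinarith [Real.exp_le_quadratic_of_nonpos hu]

theorem integral_sub_log_integral_exp_le_klDiv {Ω : Type*} [MeasurableSpace Ω]
    {P Q : Measure Ω} [IsProbabilityMeasure P] [SigmaFinite Q] [NeZero Q] {f : Ω → ℝ}
    (hfP : Integrable f P) (hfQ : Integrable (fun ω => exp (f ω)) Q) :
    ((∫ ω, f ω ∂P - log (∫ ω, exp (f ω) ∂Q) : ℝ) : EReal) ≤ klDiv P Q := by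
  unfold klDiv
  split_ifs with h
  · obtain ⟨hPQ, hllr⟩ := h
    have := isProbabilityMeasure_tilted hfQ
    have hgibbs := InformationTheory.integral_llr_add_sub_measure_univ_nonneg
      (hPQ.trans (absolutelyContinuous_tilted hfQ)) (integrable_llr_tilted_right hPQ hfP hllr hfQ)
    rw [integral_llr_tilted_right hPQ hfP hfQ hllr, llr_def] at hgibbs
    simp only [probReal_univ, add_sub_cancel_right] at hgibbs
    exact EReal.coe_le_coe_iff.2 (by linarith)
  · exact le_top

lemma integrable_of_summable_measureReal_singleton {α : Type*} [MeasurableSpace α] [Countable α]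
    [MeasurableSingletonClass α] {μ : Measure α} [IsFiniteMeasure μ] {f : α → ℝ}
    (hf : Summable fun x => μ.real {x} * ‖f x‖) : Integrable f μ := by
  rw [← Measure.sum_smul_dirac μ]
  exact integrable_sum_dirac (fun _ => measure_ne_top μ _) hf

lemma hasSum_poissonMeasure_real_singleton_mul_exp (r : NNReal) (t : ℝ) :
    HasSum (fun n : ℕ => (poissonMeasure r).real {n} * exp (t * n)) (exp (r * (exp t - 1))) := by
  have h := (NormedSpace.expSeries_div_hasSum_exp ((r : ℝ) * exp t)).mul_left (exp (-r))
  rw [← exp_eq_exp_ℝ, ← exp_add, show -(r : ℝ) + r * exp t = r * (exp t - 1) by ring] at h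
  refine h.congr_fun fun n => ?_
  rw [poissonMeasure_real_singleton, mul_pow, ← exp_nat_mul, mul_comm (n : ℝ) t]
  ring

lemma integrable_exp_mul_poissonMeasure (r : NNReal) (t : ℝ) :
    Integrable (fun n : ℕ => exp (t * n)) (poissonMeasure r) :=
  integrable_of_summable_measureReal_singleton <| by
    simpa only [norm_of_nonneg (exp_pos _).le] using
      (hasSum_poissonMeasure_real_singleton_mul_exp r t).summable

lemma integral_exp_mul_poissonMeasure (r : NNReal) (t : ℝ) :
    ∫ n : ℕ, exp (t * n) ∂poissonMeasure r = exp (r * (exp t - 1)) := by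
  rw [integral_countable (integrable_exp_mul_poissonMeasure r t)]
  exact (hasSum_poissonMeasure_real_singleton_mul_exp r t).tsum_eq

theorem stmt_7_general
    (lam : NNReal)
    (P : Measure ℕ) [IsProbabilityMeasure P]
    (hsum : Summable (fun j : ℕ => (j : ℝ) * (P {j}).toReal))
    (hE : ∑' j : ℕ, (j : ℝ) * (P {j}).toReal ≤ (lam : ℝ)) :
    ((((∑' j : ℕ, (j : ℝ) * (P {j}).toReal) - lam) ^ 2 / (2 * lam) : ℝ) : EReal)
      ≤ klDiv P (poissonMeasure lam) := by
  set E := ∑' j : ℕ, (j : ℝ) * (P {j}).toReal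
  have hmean : Integrable (fun j : ℕ => (j : ℝ)) P :=
    integrable_of_summable_measureReal_singleton <| by
      simpa only [Real.norm_natCast, measureReal_def, mul_comm] using hsum
  have hmean_eq : ∫ j : ℕ, (j : ℝ) ∂P = E := by
    rw [integral_countable hmean]
    simp only [smul_eq_mul, measureReal_def, mul_comm, E]
  set t := (E - lam) / lam
  have hDV := integral_sub_log_integral_exp_le_klDiv (hmean.const_mul t)
    (integrable_exp_mul_poissonMeasure lam t)
  rw [integral_const_mul, hmean_eq, integral_exp_mul_poissonMeasure, log_exp] at hDV
  exact (EReal.coe_le_coe_iff.2 (sq_sub_div_two_mul_le_of_le lam.2 hE)).trans hDV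

theorem stmt_7
    (lam : NNReal) (hlam : 0 < lam)
    (P : Measure ℕ) [IsProbabilityMeasure P]
    (hsum : Summable (fun j : ℕ => (j : ℝ) * (P {j}).toReal))
    (hE : ∑' j : ℕ, (j : ℝ) * (P {j}).toReal ≤ (lam : ℝ)) :
    ((((∑' j : ℕ, (j : ℝ) * (P {j}).toReal) - lam) ^ 2 / (2 * lam) : ℝ) : EReal)
      ≤ klDiv P (poissonMeasure lam) :=
  stmt_7_general lam P hsum hE
end
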